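/- In a Baire base, a set A is non-Baire if and only if A is completely non-Baire in some region D, meaning: A ∩ D ≠ ∅ ≠ D − A and for every Baire set B with B ∩ D abundant, both A ∩ B ∩ D and (D − A) ∩ B are abundant. -/

import Mathlib

structure CatBase (X : Type*) where
  regions : Set (Set X)
  nonempty_X : Nonempty X
  cover : ∀ x : X, ∃ A ∈ regions, x ∈ A
  ax2 : ∀ A ∈ regions, ∀ D : Set (Set X), D ⊆ regions → D.Nonempty →
    D.Pairwise Disjoint → Cardinal.mk D < Cardinal.mk regions →
    ((∃ B ∈ regions, B ⊆ A ∩ ⋃₀ D) → ∃ C ∈ D, ∃ B ∈ regions, B ⊆ A ∩ C) ∧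
    (¬ (∃ B ∈ regions, B ⊆ A ∩ ⋃₀ D) →
      ∃ B ∈ regions, B ⊆ A ∧ ∀ C ∈ D, Disjoint B C)

namespace CatBase

variable {X : Type*}

/-- A set is singular if every region contains a subregion disjoint from it. -/
def Singular (cb : CatBase X) (S : Set X) : Prop :=
  ∀ A ∈ cb.regions, ∃ B ∈ cb.regions, B ⊆ A ∧ Disjoint B S

/-- A set is meager if it is a countable union of singular sets. -/
def Meager (cb : CatBase X) (S : Set X) : Prop :=
  ∃ f : ℕ → Set X, (∀ n, cb.Singular (f n)) ∧ S = ⋃ n, f n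

def Abundant (cb : CatBase X) (S : Set X) : Prop := ¬ cb.Meager S

/-- A set is Baire if every region has a subregion in which the set or its complement is meager. -/
def Baire (cb : CatBase X) (S : Set X) : Prop :=
  ∀ A ∈ cb.regions, ∃ B ∈ cb.regions, B ⊆ A ∧
    (cb.Meager (S ∩ B) ∨ cb.Meager (Sᶜ ∩ B))

end CatBase

/-!
If `A` is not Baire, some region `D` has all its subregions `C` meeting both `A` and `Aᶜ` in
abundant sets. For a Baire set `B` with `B ∩ D` abundant, the Fundamental Theorem yields a
subregion `C ⊆ D` in which `Bᶜ` is meager; then `A ∩ C` and `Aᶜ ∩ C` lie, up to a meager set,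
in `A ∩ B ∩ D` and `(D \ A) ∩ B`, which are therefore abundant. Conversely, testing complete
non-Baireness with `B = X` and then with `B = A` shows that a Baire set is completely non-Baire
in no region.

The Fundamental Theorem rests on a greedy transfinite choice, along a well-order of the regions
of minimal order type, of pairwise disjoint regions in each of which `S` is meager; every
initial segment of the choice is smaller than the set of all regions, which is exactly what the
axiom `ax2` needs to show that the chosen family is dense.
-/

open Set Cardinal

theorem exists_wellOrder_forall_mk_lt (α : Type*) :
    ∃ r : α → α → Prop, IsWellOrder α r ∧ ∀ a, #{b // r b a} < #α := by
  obtain ⟨r, hwo, hr⟩ := exists_ord_eq α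
  exact ⟨r, hwo, fun a => Ordinal.card_typein (r := r) a ▸ card_typein_lt a hr⟩

namespace CatBase

variable {X : Type*} {cb : CatBase X} {S T M : Set X} {𝒟 : Set (Set X)}

theorem Singular.mono (h : cb.Singular S) (hTS : T ⊆ S) : cb.Singular T := fun A hA =>
  let ⟨B, hB, hBA, hBS⟩ := h A hA
  ⟨B, hB, hBA, hBS.mono_right hTS⟩

theorem Singular.meager (h : cb.Singular S) : cb.Meager S :=
  ⟨fun _ => S, fun _ => h, (iUnion_const S).symm⟩

theorem singular_empty : cb.Singular ∅ := fun A hA => ⟨A, hA, subset_rfl, disjoint_empty A⟩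

theorem meager_empty : cb.Meager ∅ := singular_empty.meager

theorem Meager.mono (h : cb.Meager S) (hTS : T ⊆ S) : cb.Meager T := by
  obtain ⟨f, hf, rfl⟩ := h
  refine ⟨fun n => f n ∩ T, fun n => (hf n).mono inter_subset_left, ?_⟩
  rw [← iUnion_inter, inter_eq_right.mpr hTS]

theorem Meager.iUnion {ι : Type*} [Countable ι] {f : ι → Set X} (hf : ∀ i, cb.Meager (f i)) :
    cb.Meager (⋃ i, f i) := by
  choose g hg hfg using hf
  rcases isEmpty_or_nonempty ι with hι | hι
  · rw [iUnion_of_empty]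
    exact meager_empty
  obtain ⟨e, he⟩ := exists_surjective_nat (ι × ℕ)
  refine ⟨fun k => g (e k).1 (e k).2, fun k => hg _ _, ?_⟩
  rw [he.iUnion_comp (fun p => g p.1 p.2), iUnion_prod']
  exact iUnion_congr hfg

theorem Meager.union (hS : cb.Meager S) (hT : cb.Meager T) : cb.Meager (S ∪ T) := by
  rw [union_eq_iUnion]
  exact Meager.iUnion (Bool.forall_bool.2 ⟨hT, hS⟩)

theorem Abundant.nonempty (h : cb.Abundant S) : S.Nonempty :=
  nonempty_iff_ne_empty.2 fun hS => h (hS ▸ meager_empty)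

theorem Abundant.of_subset_union_meager (hS : cb.Abundant S) (hST : S ⊆ T ∪ M)
    (hM : cb.Meager M) : cb.Abundant T :=
  fun hT => hS ((hT.union hM).mono hST)

theorem baire_univ : cb.Baire univ := fun A hA =>
  ⟨A, hA, subset_rfl, Or.inr (by rw [compl_univ, empty_inter]; exact meager_empty)⟩

theorem exists_subregion_subset_or_disjoint {A : Set X} (hA : A ∈ cb.regions)
    (h𝒟 : 𝒟 ⊆ cb.regions) (hdisj : 𝒟.Pairwise Disjoint) (hcard : #𝒟 < #cb.regions) :
    ∃ B ∈ cb.regions, B ⊆ A ∧ ((∃ C ∈ 𝒟, B ⊆ C) ∨ ∀ C ∈ 𝒟, Disjoint B C) := by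
  rcases 𝒟.eq_empty_or_nonempty with rfl | hne
  · exact ⟨A, hA, subset_rfl, Or.inr fun C hC => hC.elim⟩
  have hax := cb.ax2 A hA 𝒟 h𝒟 hne hdisj hcard
  by_cases hcov : ∃ B ∈ cb.regions, B ⊆ A ∩ ⋃₀ 𝒟
  · obtain ⟨C, hC, B, hB, hBAC⟩ := hax.1 hcov
    exact ⟨B, hB, hBAC.trans inter_subset_left, Or.inl ⟨C, hC, hBAC.trans inter_subset_right⟩⟩
  · obtain ⟨B, hB, hBA, hBdisj⟩ := hax.2 hcov
    exact ⟨B, hB, hBA, Or.inr hBdisj⟩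

theorem exists_subregion_disjoint {A D : Set X} (hA : A ∈ cb.regions) (hD : D ∈ cb.regions)
    (h : ¬ ∃ E ∈ cb.regions, E ⊆ A ∩ D) : ∃ B ∈ cb.regions, B ⊆ A ∧ Disjoint B D := by
  have hcard : #({D} : Set (Set X)) < #cb.regions := by
    rw [mk_singleton, one_lt_iff_nontrivial, nontrivial_coe_sort]
    exact ⟨A, hA, D, hD, fun hAD => h ⟨A, hA, subset_inter subset_rfl hAD.le⟩⟩
  obtain ⟨B, hB, hBA, ⟨C, rfl, hBD⟩ | hBdisj⟩ := exists_subregion_subset_or_disjoint hA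
    (singleton_subset_iff.2 hD) (pairwise_singleton D Disjoint) hcard
  · exact absurd ⟨B, hB, subset_inter hBA hBD⟩ h
  · exact ⟨B, hB, hBA, hBdisj D rfl⟩

section Greedy

variable (cb) (P : Set X → Prop) {r : cb.regions → cb.regions → Prop} (hr : WellFounded r)

open Classical in
noncomputable def greedy : cb.regions → Option (Set X) :=
  hr.fix fun a prev =>
    if h : ∃ C ∈ cb.regions, C ⊆ a ∧ P C ∧ ∀ b (hb : r b a), ∀ C' ∈ prev b hb, Disjoint C C'
    then some h.choose else none

variable {cb P}

open Classical in
theorem greedy_eq (a : cb.regions) : greedy cb P hr a =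
    if h : ∃ C ∈ cb.regions, C ⊆ a ∧ P C ∧ ∀ b, r b a → ∀ C' ∈ greedy cb P hr b, Disjoint C C'
    then some h.choose else none :=
  hr.fix_eq _ a

theorem mem_greedy {a : cb.regions} {C : Set X} (h : C ∈ greedy cb P hr a) :
    C ∈ cb.regions ∧ C ⊆ a ∧ P C ∧ ∀ b, r b a → ∀ C' ∈ greedy cb P hr b, Disjoint C C' := by
  rw [greedy_eq] at h
  split_ifs at h with hex
  · exact Option.some_inj.1 h ▸ hex.choose_spec
  · exact absurd h (Option.not_mem_none C)

theorem exists_mem_greedy {a : cb.regions}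
    (h : ∃ C ∈ cb.regions, C ⊆ a ∧ P C ∧ ∀ b, r b a → ∀ C' ∈ greedy cb P hr b, Disjoint C C') :
    ∃ C, C ∈ greedy cb P hr a :=
  ⟨h.choose, by rw [greedy_eq, dif_pos h]; rfl⟩

theorem pairwise_disjoint_greedy [Std.Trichotomous r] :
    {C | ∃ a, C ∈ greedy cb P hr a}.Pairwise Disjoint := by
  rintro C ⟨a, ha⟩ C' ⟨a', ha'⟩ hne
  rcases trichotomous_of r a a' with h | rfl | h
  · exact ((mem_greedy hr ha').2.2.2 a h C ha).symm
  · exact absurd (Option.mem_unique ha ha') hne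
  · exact (mem_greedy hr ha).2.2.2 a' h C' ha'

end Greedy

def IsDenseFamily (cb : CatBase X) (𝒟 : Set (Set X)) : Prop :=
  ∀ A ∈ cb.regions, ∃ C ∈ 𝒟, ∃ B ∈ cb.regions, B ⊆ A ∩ C

theorem exists_pairwise_disjoint_dense (P : Set X → Prop)
    (hP : ∀ A ∈ cb.regions, ∃ C ∈ cb.regions, C ⊆ A ∧ P C) :
    ∃ 𝒟 : Set (Set X), 𝒟.Pairwise Disjoint ∧ (∀ C ∈ 𝒟, P C) ∧ cb.IsDenseFamily 𝒟 := by
  obtain ⟨r, hwo, hcard⟩ := exists_wellOrder_forall_mk_lt cb.regions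
  set E := greedy cb P hwo.wf
  refine ⟨{C | ∃ a, C ∈ E a}, pairwise_disjoint_greedy hwo.wf,
    fun C ⟨_, ha⟩ => (mem_greedy hwo.wf ha).2.2.1, fun A hA => ?_⟩
  set a : cb.regions := ⟨A, hA⟩
  set earlier := {C | ∃ b, r b a ∧ C ∈ E b}
  have hearlier_card : #earlier < #cb.regions :=
    calc #earlier ≤ #(range fun b : {b // r b a} => (E b).getD ∅) :=
          mk_le_mk_of_subset fun C ⟨b, hb, hC⟩ => ⟨⟨b, hb⟩, by simp [Option.mem_def.1 hC]⟩
      _ ≤ #{b // r b a} := mk_range_le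
      _ < #cb.regions := hcard a
  obtain ⟨B, hB, hBA, ⟨C, ⟨b, -, hC⟩, hBC⟩ | hBdisj⟩ :=
    exists_subregion_subset_or_disjoint (𝒟 := earlier) hA
      (by rintro C ⟨b, -, hC⟩; exact (mem_greedy hwo.wf hC).1)
      ((pairwise_disjoint_greedy hwo.wf).mono (by rintro C ⟨b, -, hC⟩; exact ⟨b, hC⟩))
      hearlier_card
  · exact ⟨C, ⟨b, hC⟩, B, hB, subset_inter hBA hBC⟩
  · obtain ⟨C, hC, hCB, hPC⟩ := hP B hB
    obtain ⟨C', hC'⟩ := exists_mem_greedy hwo.wf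
      ⟨C, hC, hCB.trans hBA, hPC, fun b hb D hD => (hBdisj D ⟨b, hb, hD⟩).mono_left hCB⟩
    obtain ⟨hC'reg, hC'A, -⟩ := mem_greedy hwo.wf hC'
    exact ⟨C', ⟨a, hC'⟩, C', hC'reg, subset_inter hC'A subset_rfl⟩

theorem IsDenseFamily.singular_compl_sUnion (hdense : cb.IsDenseFamily 𝒟) :
    cb.Singular (⋃₀ 𝒟)ᶜ := fun A hA =>
  let ⟨_, hC, B, hB, hBAC⟩ := hdense A hA
  ⟨B, hB, hBAC.trans inter_subset_left,
    disjoint_compl_right_iff_subset.2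
      ((hBAC.trans inter_subset_right).trans (subset_sUnion_of_mem hC))⟩

theorem IsDenseFamily.singular_biUnion_inter (hdense : cb.IsDenseFamily 𝒟)
    (hdisj : 𝒟.Pairwise Disjoint) {g : Set X → Set X}
    (hg : ∀ C ∈ 𝒟, cb.Singular (g C)) : cb.Singular (⋃ C ∈ 𝒟, g C ∩ C) := by
  intro A hA
  obtain ⟨C, hC, B, hB, hBAC⟩ := hdense A hA
  obtain ⟨B', hB', hB'B, hB'g⟩ := hg C hC B hB
  refine ⟨B', hB', hB'B.trans (hBAC.trans inter_subset_left), disjoint_iUnion₂_right.2 ?_⟩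
  intro C' hC'
  rcases eq_or_ne C C' with rfl | hne
  · exact hB'g.mono_right inter_subset_left
  · exact (((hdisj hC hC' hne).mono_left (hB'B.trans (hBAC.trans inter_subset_right))).mono_right
      inter_subset_right)

theorem IsDenseFamily.meager (hdense : cb.IsDenseFamily 𝒟) (hdisj : 𝒟.Pairwise Disjoint)
    (hS : ∀ C ∈ 𝒟, cb.Meager (S ∩ C)) : cb.Meager S := by
  choose! g hg hSg using hS
  refine (hdense.singular_compl_sUnion.meager.union (Meager.iUnion fun n =>
    (hdense.singular_biUnion_inter hdisj fun C hC => hg C hC n).meager)).mono fun x hx => ?_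
  by_cases hx𝒟 : x ∈ ⋃₀ 𝒟
  · obtain ⟨C, hC, hxC⟩ := hx𝒟
    obtain ⟨n, hn⟩ := mem_iUnion.1 (hSg C hC ▸ ⟨hx, hxC⟩ : x ∈ ⋃ n, g C n)
    exact Or.inr (mem_iUnion.2 ⟨n, mem_biUnion hC ⟨hn, hxC⟩⟩)
  · exact Or.inl hx𝒟

/-- The Fundamental Theorem, in contrapositive form. -/
theorem meager_of_forall_exists_subregion
    (h : ∀ A ∈ cb.regions, ∃ C ∈ cb.regions, C ⊆ A ∧ cb.Meager (S ∩ C)) : cb.Meager S :=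
  let ⟨_, hdisj, hmeager, hdense⟩ := exists_pairwise_disjoint_dense _ h
  hdense.meager hdisj hmeager

theorem meager_inter_of_forall_exists_subregion {D : Set X} (hD : D ∈ cb.regions)
    (h : ∀ E ∈ cb.regions, E ⊆ D → ∃ C ∈ cb.regions, C ⊆ E ∧ cb.Meager (S ∩ C)) :
    cb.Meager (S ∩ D) := by
  refine meager_of_forall_exists_subregion fun A hA => ?_
  by_cases hAD : ∃ E ∈ cb.regions, E ⊆ A ∩ D
  · obtain ⟨E, hE, hEAD⟩ := hAD
    obtain ⟨C, hC, hCE, hSC⟩ := h E hE (hEAD.trans inter_subset_right)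
    exact ⟨C, hC, hCE.trans (hEAD.trans inter_subset_left),
      hSC.mono (inter_subset_inter_left _ inter_subset_left)⟩
  · obtain ⟨B, hB, hBA, hBD⟩ := exists_subregion_disjoint hA hD hAD
    refine ⟨B, hB, hBA, ?_⟩
    rw [(hBD.symm.mono_left inter_subset_right).inter_eq]
    exact meager_empty

theorem Baire.exists_subregion_meager_compl_inter {B D : Set X} (hB : cb.Baire B)
    (hD : D ∈ cb.regions) (hBD : cb.Abundant (B ∩ D)) :
    ∃ C ∈ cb.regions, C ⊆ D ∧ cb.Meager (Bᶜ ∩ C) := by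
  by_contra! hcompl
  refine hBD (meager_inter_of_forall_exists_subregion hD fun E hE hED => ?_)
  obtain ⟨C, hC, hCE, hBC | hBC⟩ := hB E hE
  · exact ⟨C, hC, hCE, hBC⟩
  · exact absurd hBC (hcompl C hC (hCE.trans hED))

end CatBase

open CatBase in
theorem stmt11 {X : Type*} (cb : CatBase X)
    (hBaire : ∀ A ∈ cb.regions, cb.Abundant A) (A : Set X) :
    ¬ cb.Baire A ↔
      ∃ D ∈ cb.regions, (A ∩ D).Nonempty ∧ (D \ A).Nonempty ∧
        ∀ B : Set X, cb.Baire B → cb.Abundant (B ∩ D) →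
          cb.Abundant (A ∩ B ∩ D) ∧ cb.Abundant ((D \ A) ∩ B) := by
  constructor
  · intro hA
    obtain ⟨D, hD, hAD⟩ : ∃ D ∈ cb.regions, ∀ C ∈ cb.regions, C ⊆ D →
        cb.Abundant (A ∩ C) ∧ cb.Abundant (Aᶜ ∩ C) := by
      simpa [Baire, Abundant] using hA
    refine ⟨D, hD, (hAD D hD subset_rfl).1.nonempty,
      (hAD D hD subset_rfl).2.nonempty.mono fun x hx => ⟨hx.2, hx.1⟩,
      fun B hB hBD => ?_⟩
    obtain ⟨C, hC, hCD, hBC⟩ := hB.exists_subregion_meager_compl_inter hD hBD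
    refine ⟨(hAD C hC hCD).1.of_subset_union_meager ?_ hBC,
      (hAD C hC hCD).2.of_subset_union_meager ?_ hBC⟩
    · rintro x ⟨hxA, hxC⟩
      by_cases hxB : x ∈ B
      · exact Or.inl ⟨⟨hxA, hxB⟩, hCD hxC⟩
      · exact Or.inr ⟨hxB, hxC⟩
    · rintro x ⟨hxA, hxC⟩
      by_cases hxB : x ∈ B
      · exact Or.inl ⟨⟨hCD hxC, hxA⟩, hxB⟩
      · exact Or.inr ⟨hxB, hxC⟩
  · rintro ⟨D, hD, -, -, hcnb⟩ hA
    have hAD : cb.Abundant (A ∩ D) := by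
      simpa using (hcnb univ baire_univ (by simpa using hBaire D hD)).1
    exact (hcnb A hA hAD).2 (by rw [sdiff_inter_self]; exact meager_empty)
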